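/- arXiv:1010.3602 — 3 statements merged into one kernel-verified Lean document; each statement's English description precedes it below -/
import Mathlib

section
/- Let A ∈ SL(2,ℝ) be hyperbolic, i.e. (tr A)² > 4. Then the conjugation action of A on the trace-zero 2×2 real matrices fixes exactly 6 rays; that is, the set of rays ℝ₊·X (X ∈ sl₂(ℝ), X ≠ 0) such that A X A⁻¹ ∈ ℝ₊·X has exactly 6 elements, of which exactly 4 consist of matrices with det X = 0 and exactly 2 consist of matrices with det X < 0. (In the paper's terminology: a hyperbolic element of SO₀(1,2) has exactly 6 fixed points in HS².) -/
/-!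
Since `(tr A)² > 4`, the eigenvalues `μ, μ⁻¹` of `A` are real and distinct, so `A = P D P⁻¹` with
`D = diag(μ, μ⁻¹)`. Conjugation by `P` maps the rays fixed by `D` bijectively onto those fixed by
`A` and preserves traces and determinants, so it suffices to treat `D`. Writing a trace-zero `X`
as `x h + y e + z f` in the standard basis of `sl₂(ℝ)`, conjugation by `D` multiplies `x, y, z`
by `1, μ², μ⁻²`, three distinct positive numbers. Hence `X` spans a fixed ray iff exactly one
coordinate is nonzero: the fixed rays are those of `±h` (space-like) and `±e, ±f` (light-like).
-/

open Matrix

def ray (X : Matrix (Fin 2) (Fin 2) ℝ) : Set (Matrix (Fin 2) (Fin 2) ℝ) :=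
  {Y | ∃ t : ℝ, 0 < t ∧ Y = t • X}

local notation "M₂" => Matrix (Fin 2) (Fin 2) ℝ

theorem Set.sep_image_image {α β : Type*} (f : α → β) (S : Set (Set α)) (p : β → Prop) :
    {r ∈ (f '' ·) '' S | ∀ y ∈ r, p y} = (f '' ·) '' {r ∈ S | ∀ x ∈ r, p (f x)} := by
  ext r
  constructor
  · rintro ⟨⟨s, hs, rfl⟩, hp⟩
    exact ⟨s, ⟨hs, Set.forall_mem_image.mp hp⟩, rfl⟩
  · rintro ⟨s, ⟨hs, hp⟩, rfl⟩
    exact ⟨⟨s, hs, rfl⟩, Set.forall_mem_image.mpr hp⟩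

section Ray

variable {X Y : M₂}

theorem mem_ray_self (X : M₂) : X ∈ ray X := ⟨1, one_pos, (one_smul ℝ X).symm⟩

theorem ray_smul_of_pos {t : ℝ} (ht : 0 < t) (X : M₂) : ray (t • X) = ray X := by
  ext Z
  constructor
  · rintro ⟨s, hs, rfl⟩
    exact ⟨s * t, by positivity, smul_smul s t X⟩
  · rintro ⟨s, hs, rfl⟩
    exact ⟨s / t, by positivity, by rw [smul_smul, div_mul_cancel₀ s ht.ne']⟩

theorem exists_pos_smul_of_ray_eq (h : ray X = ray Y) : ∃ t : ℝ, 0 < t ∧ X = t • Y :=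
  (h ▸ mem_ray_self X : X ∈ ray Y)

theorem ray_smul_eq_or_eq_neg {s : ℝ} (hs : s ≠ 0) (X : M₂) :
    ray (s • X) = ray X ∨ ray (s • X) = ray (-X) := by
  rcases hs.lt_or_gt with hs | hs
  · right
    rw [← neg_neg s, neg_smul, ← smul_neg, ray_smul_of_pos (neg_pos.mpr hs)]
  · exact Or.inl (ray_smul_of_pos hs X)

theorem ray_ne_of_sign_apply_ne (i j : Fin 2)
    (h : SignType.sign (X i j) ≠ SignType.sign (Y i j)) : ray X ≠ ray Y := by
  intro hXY
  obtain ⟨t, ht, rfl⟩ := exists_pos_smul_of_ray_eq hXY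
  simp [sign_mul, sign_pos ht] at h

theorem image_ray_of_map_smul (f : M₂ → M₂) (hf : ∀ (t : ℝ) X, f (t • X) = t • f X) (X : M₂) :
    f '' ray X = ray (f X) := by
  ext Z
  constructor
  · rintro ⟨_, ⟨t, ht, rfl⟩, rfl⟩
    exact ⟨t, ht, hf t X⟩
  · rintro ⟨t, ht, rfl⟩
    exact ⟨t • X, ⟨t, ht, rfl⟩, hf t X⟩

theorem image_conj_ray (P Q X : M₂) : (fun Y => P * Y * Q) '' ray X = ray (P * X * Q) :=
  image_ray_of_map_smul _ (fun t Y => by rw [Matrix.mul_smul, Matrix.smul_mul]) X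

theorem det_smul_fin_two (t : ℝ) (X : M₂) : (t • X).det = t ^ 2 * X.det := by
  simp

theorem forall_mem_ray_det_eq_zero_iff (X : M₂) : (∀ Y ∈ ray X, Y.det = 0) ↔ X.det = 0 :=
  ⟨fun h => h X (mem_ray_self X), fun hX _ ⟨t, _, hY⟩ => by
    rw [hY, det_smul_fin_two, hX, mul_zero]⟩

theorem forall_mem_ray_det_neg_iff (X : M₂) : (∀ Y ∈ ray X, Y.det < 0) ↔ X.det < 0 :=
  ⟨fun h => h X (mem_ray_self X), fun hX _ ⟨t, ht, hY⟩ => by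
    rw [hY, det_smul_fin_two]
    exact mul_neg_of_pos_of_neg (by positivity) hX⟩

theorem ray_ne_of_det_eq_zero_of_det_neg (hX : X.det = 0) (hY : Y.det < 0) : ray X ≠ ray Y :=
  fun h => hY.ne ((forall_mem_ray_det_eq_zero_iff Y).mp
    (h ▸ (forall_mem_ray_det_eq_zero_iff X).mpr hX))

end Ray

def fixedRays (A : M₂) : Set (Set M₂) :=
  {r | ∃ X : M₂, X ≠ 0 ∧ X.trace = 0 ∧ r = ray X ∧ A * X * A⁻¹ ∈ ray X}

theorem ray_mem_fixedRays {A X : M₂} {t : ℝ} (hX : X ≠ 0) (htr : X.trace = 0) (ht : 0 < t)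
    (h : A * X * A⁻¹ = t • X) : ray X ∈ fixedRays A :=
  ⟨X, hX, htr, rfl, t, ht, h⟩

section Conj

variable {P : M₂}

theorem conj_conj_inv (hP : IsUnit P.det) (X : M₂) : P * (P⁻¹ * X * P) * P⁻¹ = X := by
  simp [Matrix.mul_assoc, mul_nonsing_inv_cancel_left _ _ hP, mul_nonsing_inv _ hP]

theorem injective_conj_of_isUnit_det (hP : IsUnit P.det) :
    Function.Injective (fun X : M₂ => P * X * P⁻¹) := by
  intro X Y hXY
  simpa [Matrix.mul_assoc, nonsing_inv_mul_cancel_left _ _ hP, nonsing_inv_mul _ hP] using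
    congrArg (fun Z => P⁻¹ * Z * P) hXY

theorem conj_mem_ray_conj_iff (hP : IsUnit P.det) (Y Z : M₂) :
    P * Z * P⁻¹ ∈ ray (P * Y * P⁻¹) ↔ Z ∈ ray Y := by
  rw [← image_conj_ray]
  exact (injective_conj_of_isUnit_det hP).mem_set_image

theorem conj_conj_conj_inv (hP : IsUnit P.det) (D Y : M₂) :
    P * D * P⁻¹ * (P * Y * P⁻¹) * (P * D * P⁻¹)⁻¹ = P * (D * Y * D⁻¹) * P⁻¹ := by
  simp only [Matrix.mul_inv_rev, nonsing_inv_nonsing_inv _ hP, Matrix.mul_assoc,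
    nonsing_inv_mul_cancel_left _ _ hP]

theorem fixedRays_conj (hP : IsUnit P.det) (D : M₂) :
    fixedRays (P * D * P⁻¹) = (fun r => (fun X => P * X * P⁻¹) '' r) '' fixedRays D := by
  have hP' : IsUnit P := P.isUnit_iff_isUnit_det.mpr hP
  ext r
  constructor
  · rintro ⟨X, hX0, htr, rfl, hfix⟩
    obtain ⟨Y, rfl⟩ : ∃ Y, X = P * Y * P⁻¹ := ⟨_, (conj_conj_inv hP X).symm⟩
    refine ⟨ray Y, ⟨Y, ?_, ?_, rfl, ?_⟩, image_conj_ray _ _ Y⟩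
    · rintro rfl
      simp at hX0
    · rwa [trace_conj hP'] at htr
    · rwa [conj_conj_conj_inv hP, conj_mem_ray_conj_iff hP] at hfix
  · rintro ⟨_, ⟨Y, hY0, htr, rfl, hfix⟩, rfl⟩
    refine ⟨P * Y * P⁻¹, ?_, by rwa [trace_conj hP'], image_conj_ray _ _ Y, ?_⟩
    · exact fun h => hY0 (injective_conj_of_isUnit_det hP (h.trans (by simp)))
    · rwa [conj_conj_conj_inv hP, conj_mem_ray_conj_iff hP]

end Conj

def sl2h : M₂ := !![1, 0; 0, -1]
def sl2e : M₂ := !![0, 1; 0, 0]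
def sl2f : M₂ := !![0, 0; 1, 0]

noncomputable def diagInv (μ : ℝ) : M₂ := !![μ, 0; 0, μ⁻¹]

def lightlikeDiagRays : Set (Set M₂) := {ray sl2e, ray (-sl2e), ray sl2f, ray (-sl2f)}

def spacelikeDiagRays : Set (Set M₂) := {ray sl2h, ray (-sl2h)}

theorem eq_sl2_basis_of_trace_eq_zero {X : M₂} (htr : X.trace = 0) :
    X = X 0 0 • sl2h + X 0 1 • sl2e + X 1 0 • sl2f := by
  rw [trace_fin_two] at htr
  ext i j
  fin_cases i <;> fin_cases j <;> simp [sl2h, sl2e, sl2f]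
  linarith

theorem diagInv_conj {μ : ℝ} (hμ : μ ≠ 0) (X : M₂) :
    diagInv μ * X * (diagInv μ)⁻¹ = !![X 0 0, μ ^ 2 * X 0 1; μ⁻¹ ^ 2 * X 1 0, X 1 1] := by
  have hinv : (diagInv μ)⁻¹ = diagInv μ⁻¹ := by
    refine inv_eq_left_inv ?_
    ext i j
    fin_cases i <;> fin_cases j <;> simp [diagInv, hμ]
  rw [hinv, eta_fin_two X]
  ext i j
  fin_cases i <;> fin_cases j <;> simp [diagInv] <;> field_simp

theorem fixedRays_diagInv_subset {μ : ℝ} (hμ0 : μ ≠ 0) (hμ : μ ^ 2 ≠ 1) :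
    fixedRays (diagInv μ) ⊆ lightlikeDiagRays ∪ spacelikeDiagRays := by
  rintro _ ⟨X, hX0, htr, rfl, t, ht, hfix⟩
  rw [diagInv_conj hμ0] at hfix
  have hx := congrFun (congrFun hfix 0) 0
  have hy := congrFun (congrFun hfix 0) 1
  have hz := congrFun (congrFun hfix 1) 0
  simp only [of_apply, cons_val', cons_val_zero, cons_val_one, cons_val_fin_one,
    Matrix.smul_apply, smul_eq_mul] at hx hy hz
  have h1 : (1 : ℝ) ≠ μ⁻¹ ^ 2 := by rw [inv_pow]; exact (inv_ne_one.mpr hμ).symm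
  have h2 : μ ^ 2 ≠ μ⁻¹ ^ 2 := by
    rw [inv_pow]
    intro h
    have : μ ^ 2 * μ ^ 2 = 1 := by nth_rewrite 1 [h]; exact inv_mul_cancel₀ (pow_ne_zero 2 hμ0)
    exact hμ (by nlinarith [sq_nonneg μ])
  rw [eq_sl2_basis_of_trace_eq_zero htr]
  by_cases hx0 : X 0 0 = 0
  · by_cases hy0 : X 0 1 = 0
    · have hz0 : X 1 0 ≠ 0 := by
        intro hz0
        apply hX0
        rw [eq_sl2_basis_of_trace_eq_zero htr, hx0, hy0, hz0]
        simp
      simp only [hx0, hy0, zero_smul, zero_add]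
      rcases ray_smul_eq_or_eq_neg hz0 sl2f with h | h <;> simp [lightlikeDiagRays, h]
    · obtain rfl : μ ^ 2 = t := mul_right_cancel₀ hy0 hy
      have hz0 : X 1 0 = 0 := (mul_eq_mul_right_iff.mp hz).resolve_left h2.symm
      simp only [hx0, hz0, zero_smul, zero_add, add_zero]
      rcases ray_smul_eq_or_eq_neg hy0 sl2e with h | h <;> simp [lightlikeDiagRays, h]
  · obtain rfl : 1 = t := mul_right_cancel₀ hx0 (by rw [one_mul]; exact hx)
    have hy0 : X 0 1 = 0 := (mul_eq_mul_right_iff.mp hy).resolve_left hμ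
    have hz0 : X 1 0 = 0 := (mul_eq_mul_right_iff.mp hz).resolve_left h1.symm
    simp only [hy0, hz0, zero_smul, add_zero]
    rcases ray_smul_eq_or_eq_neg hx0 sl2h with h | h <;> simp [spacelikeDiagRays, h]

theorem union_subset_fixedRays_diagInv {μ : ℝ} (hμ0 : μ ≠ 0) :
    lightlikeDiagRays ∪ spacelikeDiagRays ⊆ fixedRays (diagInv μ) := by
  have hpm : ∀ (B : M₂) (t : ℝ), B ≠ 0 → B.trace = 0 → 0 < t →
      diagInv μ * B * (diagInv μ)⁻¹ = t • B →
      ray B ∈ fixedRays (diagInv μ) ∧ ray (-B) ∈ fixedRays (diagInv μ) := fun B t hB htr ht h =>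
    ⟨ray_mem_fixedRays hB htr ht h, ray_mem_fixedRays (neg_ne_zero.mpr hB)
      (by rw [trace_neg, htr, neg_zero]) ht (by rw [Matrix.mul_neg, Matrix.neg_mul, h, smul_neg])⟩
  have hh := hpm sl2h 1 (by simp [sl2h, ← Matrix.ext_iff]) (by simp [sl2h]) one_pos
    (by rw [diagInv_conj hμ0]; ext i j; fin_cases i <;> fin_cases j <;> simp [sl2h])
  have he := hpm sl2e (μ ^ 2) (by simp [sl2e, ← Matrix.ext_iff]) (by simp [sl2e]) (by positivity)
    (by rw [diagInv_conj hμ0]; ext i j; fin_cases i <;> fin_cases j <;> simp [sl2e])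
  have hf := hpm sl2f (μ⁻¹ ^ 2) (by simp [sl2f, ← Matrix.ext_iff]) (by simp [sl2f]) (by positivity)
    (by rw [diagInv_conj hμ0]; ext i j; fin_cases i <;> fin_cases j <;> simp [sl2f])
  simp only [lightlikeDiagRays, spacelikeDiagRays, Set.union_subset_iff, Set.insert_subset_iff,
    Set.singleton_subset_iff]
  exact ⟨⟨he.1, he.2, hf.1, hf.2⟩, hh.1, hh.2⟩

theorem fixedRays_diagInv {μ : ℝ} (hμ0 : μ ≠ 0) (hμ : μ ^ 2 ≠ 1) :
    fixedRays (diagInv μ) = lightlikeDiagRays ∪ spacelikeDiagRays :=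
  (fixedRays_diagInv_subset hμ0 hμ).antisymm (union_subset_fixedRays_diagInv hμ0)

theorem finite_lightlikeDiagRays : lightlikeDiagRays.Finite := by
  simp [lightlikeDiagRays]

theorem finite_spacelikeDiagRays : spacelikeDiagRays.Finite := by
  simp [spacelikeDiagRays]

theorem ncard_lightlikeDiagRays : lightlikeDiagRays.ncard = 4 :=
  Set.ncard_eq_four.mpr ⟨_, _, _, _,
    ray_ne_of_sign_apply_ne 0 1 (by simp [sl2e]),
    ray_ne_of_sign_apply_ne 0 1 (by simp [sl2e, sl2f]),
    ray_ne_of_sign_apply_ne 0 1 (by simp [sl2e, sl2f]),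
    ray_ne_of_sign_apply_ne 0 1 (by simp [sl2e, sl2f]),
    ray_ne_of_sign_apply_ne 0 1 (by simp [sl2e, sl2f]),
    ray_ne_of_sign_apply_ne 1 0 (by simp [sl2f]), rfl⟩

theorem ncard_spacelikeDiagRays : spacelikeDiagRays.ncard = 2 :=
  Set.ncard_pair (ray_ne_of_sign_apply_ne 0 0 (by simp [sl2h]))

theorem disjoint_lightlikeDiagRays_spacelikeDiagRays :
    Disjoint lightlikeDiagRays spacelikeDiagRays := by
  rw [Set.disjoint_left]
  rintro r (rfl | rfl | rfl | rfl) (h | h) <;>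
    exact ray_ne_of_det_eq_zero_of_det_neg (by simp [sl2e, sl2f]) (by simp [sl2h]) h

theorem ncard_diagRays : (lightlikeDiagRays ∪ spacelikeDiagRays).ncard = 6 := by
  rw [Set.ncard_union_eq disjoint_lightlikeDiagRays_spacelikeDiagRays finite_lightlikeDiagRays
    finite_spacelikeDiagRays, ncard_lightlikeDiagRays, ncard_spacelikeDiagRays]

theorem sep_det_eq_zero_diagRays :
    {r ∈ lightlikeDiagRays ∪ spacelikeDiagRays | ∀ X ∈ r, X.det = 0} = lightlikeDiagRays := by
  ext r
  simp only [lightlikeDiagRays, spacelikeDiagRays, Set.mem_union, Set.mem_insert_iff,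
    Set.mem_singleton_iff]
  constructor
  · rintro ⟨(h | h | h | h) | (rfl | rfl), hdet⟩ <;>
      simp_all [forall_mem_ray_det_eq_zero_iff, sl2h]
  · rintro (rfl | rfl | rfl | rfl) <;> simp [forall_mem_ray_det_eq_zero_iff, sl2e, sl2f]

theorem sep_det_neg_diagRays :
    {r ∈ lightlikeDiagRays ∪ spacelikeDiagRays | ∀ X ∈ r, X.det < 0} = spacelikeDiagRays := by
  ext r
  simp only [lightlikeDiagRays, spacelikeDiagRays, Set.mem_union, Set.mem_insert_iff,
    Set.mem_singleton_iff]
  constructor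
  · rintro ⟨(rfl | rfl | rfl | rfl) | h, hdet⟩ <;>
      simp_all [forall_mem_ray_det_neg_iff, sl2e, sl2f]
  · rintro (rfl | rfl) <;> simp [forall_mem_ray_det_neg_iff, sl2h]

theorem ne_zero_and_sq_ne_one_of_four_lt_sq_add_inv {μ : ℝ} (h : 4 < (μ + μ⁻¹) ^ 2) :
    μ ≠ 0 ∧ μ ^ 2 ≠ 1 := by
  refine ⟨fun hμ => by simp [hμ] at h; linarith, fun hμ => h.ne' ?_⟩
  have : μ⁻¹ ^ 2 = 1 := by rw [inv_pow, hμ, inv_one]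
  have hμ0 : μ ≠ 0 := by rintro rfl; simp at hμ
  linear_combination hμ + this + 2 * mul_inv_cancel₀ hμ0

theorem exists_add_inv_eq {t : ℝ} (ht : 4 < t ^ 2) : ∃ μ : ℝ, μ + μ⁻¹ = t := by
  have hs := Real.sq_sqrt (by linarith : (0 : ℝ) ≤ t ^ 2 - 4)
  set s := Real.sqrt (t ^ 2 - 4)
  have hμ0 : t + s ≠ 0 := fun h => by
    rw [show s = -t by linarith, neg_sq] at hs
    linarith
  refine ⟨(t + s) / 2, ?_⟩
  field_simp
  linear_combination hs

theorem exists_mul_eq_mul_diagInv {A : M₂} (hA : A.det = 1) (htr : 4 < A.trace ^ 2) :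
    ∃ P : M₂, IsUnit P.det ∧ ∃ μ : ℝ, μ ≠ 0 ∧ μ ^ 2 ≠ 1 ∧ A * P = P * diagInv μ := by
  obtain ⟨a, b, c, d, rfl⟩ : ∃ a b c d, A = !![a, b; c, d] := ⟨_, _, _, _, eta_fin_two A⟩
  rw [det_fin_two_of] at hA
  rw [trace_fin_two_of] at htr
  by_cases hb : b = 0
  · subst hb
    have ha : a ≠ 0 := by rintro rfl; simp at hA
    obtain rfl : d = a⁻¹ := by field_simp; linarith
    obtain ⟨-, hμ⟩ := ne_zero_and_sq_ne_one_of_four_lt_sq_add_inv htr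
    have had : a - a⁻¹ ≠ 0 := fun h => hμ (by field_simp at h; linarith)
    refine ⟨!![a - a⁻¹, 0; c, 1], by simpa [det_fin_two_of] using had, a, ha, hμ, ?_⟩
    ext i j
    fin_cases i <;> fin_cases j <;> simp [diagInv]
    field_simp
    ring
  · obtain ⟨μ, hμt⟩ := exists_add_inv_eq htr
    obtain ⟨hμ0, hμ⟩ := ne_zero_and_sq_ne_one_of_four_lt_sq_add_inv (hμt ▸ htr)
    have hinv := mul_inv_cancel₀ hμ0
    have hμμ : μ⁻¹ - μ ≠ 0 := fun h => hμ (by linear_combination -μ * h + hinv)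
    -- the columns `(b, μ - a)` and `(b, μ⁻¹ - a)` are eigenvectors for `μ` and `μ⁻¹`
    refine ⟨!![b, b; μ - a, μ⁻¹ - a], ?_, μ, hμ0, hμ, ?_⟩
    · rw [det_fin_two_of, isUnit_iff_ne_zero]
      convert mul_ne_zero hb hμμ using 1
      ring
    · ext i j
      fin_cases i <;> fin_cases j <;> simp [diagInv]
      · ring
      · ring
      · linear_combination -hA - μ * hμt + hinv
      · linear_combination -hA - μ⁻¹ * hμt + hinv

theorem exists_conj_diagInv {A : M₂} (hA : A.det = 1) (htr : 4 < A.trace ^ 2) :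
    ∃ P : M₂, IsUnit P.det ∧ ∃ μ : ℝ, μ ≠ 0 ∧ μ ^ 2 ≠ 1 ∧ A = P * diagInv μ * P⁻¹ := by
  obtain ⟨P, hP, μ, hμ0, hμ, hAP⟩ := exists_mul_eq_mul_diagInv hA htr
  exact ⟨P, hP, μ, hμ0, hμ, by rw [← hAP, mul_nonsing_inv_cancel_right _ _ hP]⟩

/-- A hyperbolic element of `SL(2,ℝ)`, acting by conjugation on trace-zero
matrices, fixes exactly `6` rays: `4` light-like ones (`det = 0`) and `2`
space-like ones (`det < 0`). -/
theorem hyperbolic_fixes_six_rays (A : Matrix (Fin 2) (Fin 2) ℝ)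
    (hA : A.det = 1) (htr : 4 < A.trace ^ 2) :
    let S : Set (Set (Matrix (Fin 2) (Fin 2) ℝ)) :=
      {r | ∃ X : Matrix (Fin 2) (Fin 2) ℝ,
        X ≠ 0 ∧ X.trace = 0 ∧ r = ray X ∧ A * X * A⁻¹ ∈ ray X}
    S.Finite ∧ S.ncard = 6 ∧
      {r ∈ S | ∀ X ∈ r, X.det = 0}.ncard = 4 ∧
      {r ∈ S | ∀ X ∈ r, X.det < 0}.ncard = 2 := by
  intro S
  obtain ⟨P, hP, μ, hμ0, hμ, rfl⟩ := exists_conj_diagInv hA htr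
  have hS : S =
      (fun r => (fun X => P * X * P⁻¹) '' r) '' (lightlikeDiagRays ∪ spacelikeDiagRays) := by
    rw [← fixedRays_diagInv hμ0 hμ, ← fixedRays_conj hP]
    rfl
  have hinj : Function.Injective (fun r : Set M₂ => (fun X => P * X * P⁻¹) '' r) :=
    Set.image_injective.mpr (injective_conj_of_isUnit_det hP)
  have hdet (X : M₂) : (P * X * P⁻¹).det = X.det := det_conj (P.isUnit_iff_isUnit_det.mpr hP) X
  simp only [hS, Set.sep_image_image, hdet, Set.ncard_image_of_injective _ hinj,
    sep_det_eq_zero_diagRays, sep_det_neg_diagRays]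
  exact ⟨(finite_lightlikeDiagRays.union finite_spacelikeDiagRays).image _, ncard_diagRays,
    ncard_lightlikeDiagRays, ncard_spacelikeDiagRays⟩
end

section
/- Every local homeomorphism f : ℝ → ℝ is an open embedding; in particular it is injective and a homeomorphism onto its (open) image. -/
open Set

/-- If `f` is continuous and open and `f a = f b` with `a < b`, the extremum of `f` on
`[a,b]` attained at an interior point would contradict openness; likewise constancy. -/
private lemma aux_inj (f : ℝ → ℝ) (hc : Continuous f) (ho : IsOpenMap f) :
    Function.Injective f := by
  intro a b hab
  by_contra hne
  wlog hlt : a < b generalizing a b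
  · exact this hab.symm (Ne.symm hne) (lt_of_le_of_ne (not_lt.mp hlt) (Ne.symm hne))
  have hopen : IsOpen (f '' Ioo a b) := ho _ isOpen_Ioo
  -- any extremum on [a,b] is attained at an endpoint, hence equals f a
  have key : ∀ x ∈ Icc a b, f x = f a := by
    have hmax : ∀ c ∈ Icc a b, IsMaxOn f (Icc a b) c → f c = f a := by
      intro c hc' hmaxc
      rcases eq_or_lt_of_le hc'.1 with h | h
      · exact h ▸ rfl
      rcases eq_or_lt_of_le hc'.2 with h2 | h2
      · rw [h2, ← hab]
      -- c ∈ Ioo a b : contradiction with openness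
      exfalso
      have hmem : f c ∈ f '' Ioo a b := ⟨c, ⟨h, h2⟩, rfl⟩
      rcases Metric.isOpen_iff.mp hopen _ hmem with ⟨ε, hε, hball⟩
      have : f c + ε / 2 ∈ f '' Ioo a b := by
        apply hball
        rw [Metric.mem_ball, Real.dist_eq]
        have heq : f c + ε / 2 - f c = ε / 2 := by ring
        rw [heq, abs_of_pos (by linarith)]; linarith
      rcases this with ⟨x, hx, hfx⟩
      have := hmaxc (Ioo_subset_Icc_self hx)
      simp only [mem_setOf_eq] at this
      rw [hfx] at this
      linarith
    have hmin : ∀ c ∈ Icc a b, IsMinOn f (Icc a b) c → f c = f a := by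
      intro c hc' hminc
      rcases eq_or_lt_of_le hc'.1 with h | h
      · exact h ▸ rfl
      rcases eq_or_lt_of_le hc'.2 with h2 | h2
      · rw [h2, ← hab]
      exfalso
      have hmem : f c ∈ f '' Ioo a b := ⟨c, ⟨h, h2⟩, rfl⟩
      rcases Metric.isOpen_iff.mp hopen _ hmem with ⟨ε, hε, hball⟩
      have : f c - ε / 2 ∈ f '' Ioo a b := by
        apply hball
        rw [Metric.mem_ball, Real.dist_eq]
        have heq : f c - ε / 2 - f c = -(ε / 2) := by ring
        rw [heq, abs_neg, abs_of_pos (by linarith)]; linarith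
      rcases this with ⟨x, hx, hfx⟩
      have := hminc (Ioo_subset_Icc_self hx)
      simp only [mem_setOf_eq] at this
      rw [hfx] at this
      linarith
    obtain ⟨cM, hcM, hM⟩ := isCompact_Icc.exists_isMaxOn (nonempty_Icc.mpr hlt.le)
      (hc.continuousOn (s := Icc a b))
    obtain ⟨cm, hcm, hm⟩ := isCompact_Icc.exists_isMinOn (nonempty_Icc.mpr hlt.le)
      (hc.continuousOn (s := Icc a b))
    intro x hx
    have h1 := hM hx
    have h2 := hm hx
    simp only [mem_setOf_eq] at h1 h2
    have := hmax cM hcM hM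
    have := hmin cm hcm hm
    linarith
  -- so f is constant on Ioo a b, hence its image is the non-open singleton {f a}
  have himg : f '' Ioo a b = {f a} := by
    apply Subset.antisymm
    · rintro _ ⟨x, hx, rfl⟩
      exact key x (Ioo_subset_Icc_self hx)
    · rintro _ rfl
      exact ⟨(a + b) / 2, ⟨by linarith, by linarith⟩,
        key _ ⟨by linarith, by linarith⟩⟩
  rw [himg] at hopen
  exact not_isOpen_singleton _ hopen

/-- Every local homeomorphism `ℝ → ℝ` is an open embedding; in particular it is
injective, hence a homeomorphism onto its open image. -/
theorem isLocalHomeomorph_real_isOpenEmbedding (f : ℝ → ℝ)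
    (hf : IsLocalHomeomorph f) :
    Topology.IsOpenEmbedding f ∧ Function.Injective f := by
  have hinj : Function.Injective f := aux_inj f hf.continuous hf.isOpenMap
  exact ⟨hf.isOpenEmbedding_of_injective hinj, hinj⟩
end

section
/- Let a < b be real numbers and let f : ℝ → ℝ be a strictly increasing homeomorphism with f(a) = a, f(b) = b, and x < f(x) for every x ∈ (a,b). Then f restricts to a homeomorphism of the open interval (a,b), the resulting ℤ-action on (a,b) given by n • x = fⁿ(x) is free and properly discontinuous, and for every x ∈ (a,b), fⁿ(x) → b as n → +∞ and fⁿ(x) → a as n → −∞. -/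
/-! The powers of `f` are increasing bijections fixing `a` and `b`, so they preserve `(a,b)`,
and since `x < f x` there, every orbit `n ↦ fⁿ(x)` in `(a,b)` is strictly increasing; in
particular the action is free. A monotone bounded orbit converges at both ends, and by
continuity each limit is a fixed point of `f`; as `f` has no fixed point in `(a,b)`, the limits
are `b` and `a`. For compact `K, L ⊆ (a,b)`, applying this to `min K` and `max K` shows that
`fⁿ(K)` lies above `L` for large `n` and below `L` for very negative `n`, so only finitely many
`n` remain. -/

open Filter Set Topology

namespace Equiv.Perm

variable {α : Type*}

theorem zpow_add_one_apply (e : Perm α) (n : ℤ) (x : α) : (e ^ (n + 1)) x = e ((e ^ n) x) := by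
  rw [add_comm, zpow_add, zpow_one, mul_apply]

theorem apply_eq_of_tendsto_zpow_apply [TopologicalSpace α] [T2Space α] {e : Perm α}
    (hc : Continuous e) {l : Filter ℤ} [l.NeBot] (hl : Tendsto (· + 1) l l) {x y : α}
    (h : Tendsto (fun n => (e ^ n) x) l (𝓝 y)) : e y = y := by
  refine tendsto_nhds_unique ((hc.tendsto y).comp h) ?_
  simpa only [Function.comp_def, zpow_add_one_apply] using h.comp hl

section LinearOrder

variable [LinearOrder α] {e : Perm α}

theorem strictMono_zpow (he : StrictMono e) (n : ℤ) : StrictMono ⇑(e ^ n) := by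
  have he' : StrictMono ⇑e⁻¹ := fun x y h => he.lt_iff_lt.1 (by simpa using h)
  cases n with
  | ofNat n => simpa [coe_pow] using he.iterate n
  | negSucc n => simpa [zpow_negSucc, ← inv_pow, coe_pow] using he'.iterate (n + 1)

theorem image_Ioo_of_strictMono (he : StrictMono e) (a b : α) :
    e '' Ioo a b = Ioo (e a) (e b) :=
  (he.orderIsoOfSurjective e e.surjective).image_Ioo a b

variable {a b : α} (hmono : StrictMono e) (ha : e a = a) (hb : e b = b)
include hmono ha hb

theorem mapsTo_zpow_Ioo (n : ℤ) : MapsTo (e ^ n) (Ioo a b) (Ioo a b) := fun x hx => by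
  have hmono' := strictMono_zpow hmono n
  simpa only [mem_Ioo, zpow_apply_eq_self_of_apply_eq_self ha,
    zpow_apply_eq_self_of_apply_eq_self hb]
    using And.intro (hmono' hx.1) (hmono' hx.2)

variable (hf : ∀ x ∈ Ioo a b, x < e x)
include hf

theorem strictMono_zpow_apply {x : α} (hx : x ∈ Ioo a b) :
    StrictMono fun n : ℤ => (e ^ n) x :=
  strictMono_int_of_lt_succ fun n => by
    simpa only [zpow_add_one_apply] using hf _ (mapsTo_zpow_Ioo hmono ha hb n hx)

end LinearOrder

section Limits

variable [ConditionallyCompleteLinearOrder α] [TopologicalSpace α] [OrderTopology α]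
  {e : Perm α} {a b : α} (hmono : StrictMono e) (ha : e a = a) (hb : e b = b)
  (hf : ∀ x ∈ Ioo a b, x < e x) (hc : Continuous e)
include hmono ha hb hf hc

theorem tendsto_zpow_apply_atTop {x : α} (hx : x ∈ Ioo a b) :
    Tendsto (fun n : ℤ => (e ^ n) x) atTop (𝓝 b) := by
  have hbdd : BddAbove (range fun n : ℤ => (e ^ n) x) :=
    ⟨b, forall_mem_range.2 fun n => (mapsTo_zpow_Ioo hmono ha hb n hx).2.le⟩
  have hlim := tendsto_atTop_ciSup (strictMono_zpow_apply hmono ha hb hf hx).monotone hbdd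
  set L := ⨆ n : ℤ, (e ^ n) x
  have hfix : e L = L :=
    apply_eq_of_tendsto_zpow_apply hc (tendsto_atTop_add_const_right _ 1 tendsto_id) hlim
  have hLb : L ≤ b := ciSup_le fun n => (mapsTo_zpow_Ioo hmono ha hb n hx).2.le
  have haL : a < L := hx.1.trans_le (by simpa using le_ciSup hbdd 0)
  obtain rfl | hLb := hLb.eq_or_lt
  · exact hlim
  · exact absurd hfix (hf L ⟨haL, hLb⟩).ne'

theorem tendsto_zpow_apply_atBot {x : α} (hx : x ∈ Ioo a b) :
    Tendsto (fun n : ℤ => (e ^ n) x) atBot (𝓝 a) := by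
  have hbdd : BddBelow (range fun n : ℤ => (e ^ n) x) :=
    ⟨a, forall_mem_range.2 fun n => (mapsTo_zpow_Ioo hmono ha hb n hx).1.le⟩
  have hlim := tendsto_atBot_ciInf (strictMono_zpow_apply hmono ha hb hf hx).monotone hbdd
  set L := ⨅ n : ℤ, (e ^ n) x
  have hfix : e L = L :=
    apply_eq_of_tendsto_zpow_apply hc (tendsto_atBot_add_const_right _ 1 tendsto_id) hlim
  have haL : a ≤ L := le_ciInf fun n => (mapsTo_zpow_Ioo hmono ha hb n hx).1.le
  have hLb : L < b := (by simpa using ciInf_le hbdd 0 : L ≤ x).trans_lt hx.2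
  obtain rfl | haL := haL.eq_or_lt
  · exact hlim
  · exact absurd hfix (hf L ⟨haL, hLb⟩).ne'

theorem finite_setOf_zpow_image_inter_nonempty {K L : Set α} (hK : IsCompact K)
    (hKs : K ⊆ Ioo a b) (hL : IsCompact L) (hLs : L ⊆ Ioo a b) :
    {n : ℤ | ((e ^ n) '' K ∩ L).Nonempty}.Finite := by
  rcases K.eq_empty_or_nonempty with rfl | hKne
  · simp
  rcases L.eq_empty_or_nonempty with rfl | hLne
  · simp
  have htop : ∀ᶠ n : ℤ in atTop, sSup L < (e ^ n) (sInf K) :=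
    (tendsto_zpow_apply_atTop hmono ha hb hf hc (hKs (hK.sInf_mem hKne))).eventually
      (lt_mem_nhds (hLs (hL.sSup_mem hLne)).2)
  have hbot : ∀ᶠ n : ℤ in atBot, (e ^ n) (sSup K) < sInf L :=
    (tendsto_zpow_apply_atBot hmono ha hb hf hc (hKs (hK.sSup_mem hKne))).eventually
      (gt_mem_nhds (hLs (hL.sInf_mem hLne)).1)
  have hdisj : ∀ᶠ n : ℤ in cofinite, ¬((e ^ n) '' K ∩ L).Nonempty := by
    rw [Int.cofinite_eq, eventually_sup]
    refine ⟨hbot.mono fun n hn => ?_, htop.mono fun n hn => ?_⟩ <;>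
      rintro ⟨_, ⟨x, hx, rfl⟩, hy⟩
    · exact hn.not_ge ((csInf_le hL.bddBelow hy).trans
        ((strictMono_zpow hmono n).monotone (le_csSup hK.bddAbove hx)))
    · exact hn.not_ge (((strictMono_zpow hmono n).monotone (csInf_le hK.bddBelow hx)).trans
        (le_csSup hL.bddAbove hy))
  simpa using eventually_cofinite.1 hdisj

end Limits

end Equiv.Perm

theorem interval_action_free_properly_discontinuous_general (a b : ℝ)
    (f : ℝ ≃ₜ ℝ) (hmono : StrictMono f) (ha : f a = a) (hb : f b = b)
    (hf : ∀ x ∈ Set.Ioo a b, x < f x) :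
    (⇑f) '' Set.Ioo a b = Set.Ioo a b ∧
    (∀ (n : ℤ), ∀ x ∈ Set.Ioo a b, (f.toEquiv ^ n) x = x → n = 0) ∧
    (∀ K L : Set ℝ, K ⊆ Set.Ioo a b → L ⊆ Set.Ioo a b →
        IsCompact K → IsCompact L →
        {n : ℤ | ((⇑(f.toEquiv ^ n)) '' K ∩ L).Nonempty}.Finite) ∧
    (∀ x ∈ Set.Ioo a b,
        Tendsto (fun n : ℤ => (f.toEquiv ^ n) x) atTop (nhds b) ∧
        Tendsto (fun n : ℤ => (f.toEquiv ^ n) x) atBot (nhds a)) := by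
  refine ⟨?_, fun n x hx hfix => ?_, fun K L hKs hLs hK hL =>
    Equiv.Perm.finite_setOf_zpow_image_inter_nonempty hmono ha hb hf f.continuous hK hKs hL hLs,
    fun x hx => ⟨Equiv.Perm.tendsto_zpow_apply_atTop hmono ha hb hf f.continuous hx,
      Equiv.Perm.tendsto_zpow_apply_atBot hmono ha hb hf f.continuous hx⟩⟩
  · simpa [ha, hb] using Equiv.Perm.image_Ioo_of_strictMono hmono a b
  · exact (Equiv.Perm.strictMono_zpow_apply hmono ha hb hf hx).injective (by simpa using hfix)

/-- If `f` is a strictly increasing homeomorphism of `ℝ` fixing `a < b` with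
`x < f x` on `(a,b)`, then `f` restricts to a homeomorphism of `(a,b)`, the
induced `ℤ`-action on `(a,b)` is free and properly discontinuous, and for
`x ∈ (a,b)` one has `fⁿ(x) → b` as `n → +∞` and `fⁿ(x) → a` as `n → −∞`. -/
theorem interval_action_free_properly_discontinuous (a b : ℝ) (hab : a < b)
    (f : ℝ ≃ₜ ℝ) (hmono : StrictMono f) (ha : f a = a) (hb : f b = b)
    (hf : ∀ x ∈ Set.Ioo a b, x < f x) :
    (⇑f) '' Set.Ioo a b = Set.Ioo a b ∧
    (∀ (n : ℤ), ∀ x ∈ Set.Ioo a b, (f.toEquiv ^ n) x = x → n = 0) ∧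
    (∀ K L : Set ℝ, K ⊆ Set.Ioo a b → L ⊆ Set.Ioo a b →
        IsCompact K → IsCompact L →
        {n : ℤ | ((⇑(f.toEquiv ^ n)) '' K ∩ L).Nonempty}.Finite) ∧
    (∀ x ∈ Set.Ioo a b,
        Tendsto (fun n : ℤ => (f.toEquiv ^ n) x) atTop (nhds b) ∧
        Tendsto (fun n : ℤ => (f.toEquiv ^ n) x) atBot (nhds a)) :=
  interval_action_free_properly_discontinuous_general a b f hmono ha hb hf
end
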